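/- (Well-formed derivations are valid) In the extended CBN^γ system with the unused attribute U, if Γ ⊢_CBN e :^γ τ and all types in Γ are well formed with respect to their associated vectors (WF Γ), then γ ⊢_WF τ, i.e., 𝕃(γ) = 𝕃(γ + 𝔼(τ)), where 𝔼(τ) sums all latent attribute vectors appearing in positive positions of τ. -/

import Mathlib

/-! # Extended CBN^γ with unused-variable tracking (Section 6) -/

/-- Extended strictness attributes: S (strict), Q (unknown, written `?`),
L (lazy), U (unused). -/
inductive Attr : Type
  | S | Q | L | U
deriving DecidableEq

/-- Addition on extended attributes: `U` is the identity; on {S, ?, L}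
addition is as before. -/
def Attr.add : Attr → Attr → Attr
  | .U, b => b
  | a, .U => a
  | .S, _ => .S
  | _, .S => .S
  | .Q, _ => .Q
  | _, .Q => .Q
  | .L, .L => .L

/-- The extended information order, generated by `? ≤ L`, `? ≤ S`, `L ≤ U`. -/
def Attr.le (a b : Attr) : Prop := a = b ∨ a = .Q ∨ (a = .L ∧ b = .U)

/-- Lazify: `U ↦ U`, everything else to `L`. -/
def Attr.lazify : Attr → Attr
  | .U => .U
  | _ => .L

abbrev Var := String

/-- Attribute vectors: total maps into extended attributes, with the
identity `U` playing the role of absence. -/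
abbrev Vec := Var → Attr

def Vec.add (g1 g2 : Vec) : Vec := fun x => (g1 x).add (g2 x)
def Vec.le (g1 g2 : Vec) : Prop := ∀ x, (g1 x).le (g2 x)
def Vec.lazify (g : Vec) : Vec := fun x => (g x).lazify
/-- The all-unused vector `Ū`. -/
def Vec.unused : Vec := fun _ => Attr.U
def Vec.single (x : Var) (a : Attr) : Vec := fun y => if y = x then a else Attr.U
/-- Remove `x` from a vector (the operation `⇂x`). -/
def Vec.drop (g : Vec) (x : Var) : Vec := fun y => if y = x then Attr.U else g y

/-- CBN types. -/
inductive NTy : Type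
  | unit : NTy
  | prod : NTy → Vec → NTy → Vec → NTy
  | sum : NTy → Vec → NTy → Vec → NTy
  | arr : Var → Attr → NTy → Vec → Vec → NTy → NTy

/-- Remove a variable from all vectors in a CBN type. -/
def NTy.drop : NTy → Var → NTy
  | .unit, _ => .unit
  | .prod τ1 g1 τ2 g2, x =>
      .prod (τ1.drop x) (g1.drop x) (τ2.drop x) (g2.drop x)
  | .sum τ1 g1 τ2 g2, x =>
      .sum (τ1.drop x) (g1.drop x) (τ2.drop x) (g2.drop x)
  | .arr y α τ1 g1 g2 τ2, x =>
      .arr y α (τ1.drop x) (g1.drop x) (g2.drop x) (τ2.drop x)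

/-- The effects-of function `𝔼(τ)`: sums all latent vectors in positive
positions of a type. -/
def NTy.eff : NTy → Vec
  | .unit => Vec.unused
  | .prod τ1 g1 τ2 g2 => ((g1.add g2).add τ1.eff).add τ2.eff
  | .sum τ1 g1 τ2 g2 => ((g1.add g2).add τ1.eff).add τ2.eff
  | .arr x _ τ1 _ g2 τ2 => (g2.add τ1.eff).add (τ2.eff.drop x)

mutual
/-- `γ ⊢_WF τ`: τ is well formed and `𝕃(γ) = 𝕃(γ + 𝔼(τ))`. -/
inductive WFv : Vec → NTy → Prop
  | mk {γ τ} : WFt τ → γ.lazify = (γ.add τ.eff).lazify → WFv γ τ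
/-- `WF τ`: structural well-formedness of a type (Figure 16). -/
inductive WFt : NTy → Prop
  | unit : WFt .unit
  | prod {τ1 g1 τ2 g2} : WFv g1 τ1 → WFv g2 τ2 → WFt (.prod τ1 g1 τ2 g2)
  | sum {τ1 g1 τ2 g2} : WFv g1 τ1 → WFv g2 τ2 → WFt (.sum τ1 g1 τ2 g2)
  | arr {x α τ1 g1 g2 τ2} : WFv g1 τ1 → WFv g2 (τ2.drop x) →
      WFt (.arr x α τ1 g1 g2 τ2)
end

/-- CBN expressions. -/
inductive Tm : Type
  | unit : Tm
  | var : Var → Tm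
  | inl : Tm → Tm
  | inr : Tm → Tm
  | pair : Tm → Tm → Tm
  | lam : Var → Tm → Tm
  | app : Tm → Tm → Tm
  | letin : Var → Tm → Tm → Tm
  | sub : Tm → Tm
  | seq : Tm → Tm → Tm
  | split : Var → Var → Tm → Tm → Tm
  | case : Tm → Var → Tm → Var → Tm → Tm

abbrev NCtx := Var → Option (NTy × Vec)

def NCtx.ext (Γ : NCtx) (x : Var) (τ : NTy) (γ : Vec) : NCtx :=
  fun y => if y = x then some (τ, γ) else Γ y

/-- `WF Γ`: all types in the context are well formed with respect to
their associated vectors. -/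
def WFCtx (Γ : NCtx) : Prop := ∀ x τ γ, Γ x = some (τ, γ) → WFv γ τ

/-- Extended CBN typing `Γ ⊢_CBN e :^γ τ` (Figure 17). -/
inductive NHasTy : NCtx → Tm → Vec → NTy → Prop
  | var {Γ : NCtx} {x τ γ} : Γ x = some (τ, γ) →
      NHasTy Γ (.var x) (γ.add (Vec.single x .S)) τ
  | unit {Γ} : NHasTy Γ .unit Vec.unused .unit
  | pair {Γ e1 e2 γ1 γ2 τ1 τ2} :
      NHasTy Γ e1 γ1 τ1 → NHasTy Γ e2 γ2 τ2 →
      NHasTy Γ (.pair e1 e2) (γ1.add γ2).lazify (.prod τ1 γ1 τ2 γ2)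
  | inl {Γ e γ1 τ1} (τ2 : NTy) (γ2 : Vec) :
      NHasTy Γ e γ1 τ1 →
      γ1.lazify = γ2.lazify →
      WFv γ2 τ2 →
      NHasTy Γ (.inl e) ((γ1.add γ2).add τ2.eff).lazify (.sum τ1 γ1 τ2 γ2)
  | inr {Γ e γ2 τ2} (τ1 : NTy) (γ1 : Vec) :
      NHasTy Γ e γ2 τ2 →
      γ1.lazify = γ2.lazify →
      WFv γ1 τ1 →
      NHasTy Γ (.inr e) ((γ1.add γ2).add τ1.eff).lazify (.sum τ1 γ1 τ2 γ2)
  | sub {Γ e γ γ' τ} : NHasTy Γ e γ' τ → Vec.le γ γ' →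
      NHasTy Γ (.sub e) γ τ
  | letin {Γ x e1 e2 γ1 γ2 τ1 τ2} :
      NHasTy Γ e1 γ1 τ1 →
      NHasTy (Γ.ext x τ1 γ1) e2 γ2 τ2 →
      NHasTy Γ (.letin x e1 e2) (γ1.lazify.add (γ2.drop x)) (τ2.drop x)
  | lam {Γ x e γ γ1 τ1 τ2} :
      NHasTy (Γ.ext x τ1 γ1) e γ τ2 →
      WFv γ1 τ1 →
      (τ2.eff.drop x).lazify = (γ1.add (τ2.eff.drop x)).lazify →
      NHasTy Γ (.lam x e) (γ1.add (γ.drop x)).lazify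
        (.arr x (γ x) τ1 γ1 (γ.drop x) τ2)
  | app {Γ e1 e2 x α γ1 γ2 γ3 τ1 τ2} :
      NHasTy Γ e1 γ1 (.arr x α τ1 γ2 γ3 τ2) →
      NHasTy Γ e2 γ2 τ1 →
      NHasTy Γ (.app e1 e2) ((γ1.add γ3).add γ2.lazify) (τ2.drop x)
  | seq {Γ e1 e2 γ1 γ2 τ} :
      NHasTy Γ e1 γ1 .unit → NHasTy Γ e2 γ2 τ →
      NHasTy Γ (.seq e1 e2) (γ1.add γ2) τ
  | split {Γ x1 x2 e1 e2 γ1 γ2 g1 g2 τ1 τ2 τ} :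
      NHasTy Γ e1 γ1 (.prod τ1 g1 τ2 g2) →
      NHasTy ((Γ.ext x1 τ1 g1).ext x2 τ2 g2) e2 γ2 τ →
      NHasTy Γ (.split x1 x2 e1 e2)
        (γ1.add ((γ2.drop x1).drop x2)) ((τ.drop x1).drop x2)
  | case {Γ e1 x1 e2 x2 e3 γ1 g2 g3 g1' g2' τ1 τ2 τ1' τ2'} :
      NHasTy Γ e1 γ1 (.sum τ1 g1' τ2 g2') →
      NHasTy (Γ.ext x1 τ1 g1') e2 g2 τ1' →
      NHasTy (Γ.ext x2 τ2 g2') e3 g3 τ2' →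
      g2.drop x1 = g3.drop x2 →
      τ1'.drop x1 = τ2'.drop x2 →
      NHasTy Γ (.case e1 x1 e2 x2 e3) (γ1.add (g2.drop x1)) (τ1'.drop x1)
/-! Validity `𝕃(γ) = 𝕃(γ + 𝔼(τ))` says exactly that the support of `𝔼(τ)` is contained in
the support of `γ`. The typing rules build the conclusion's vector by unions of supports of the
premises' vectors, and remove bound variables from vector and type alike; both preserve the
inclusion. The other ingredient is that the components of a well-formed type are valid pairs:
they validate the context extensions of `let`, `split` and `case`, and the result of `app`. -/

def Vec.support (g : Vec) : Set Var := {x | g x ≠ .U}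

namespace Vec

@[simp]
lemma support_add (g1 g2 : Vec) : (g1.add g2).support = g1.support ∪ g2.support := by
  ext x
  simp only [support, add, Set.mem_ofPred_eq, Set.mem_union]
  cases g1 x <;> cases g2 x <;> decide

@[simp]
lemma support_lazify (g : Vec) : g.lazify.support = g.support := by
  ext x
  simp only [support, lazify, Set.mem_ofPred_eq]
  cases g x <;> decide

@[simp]
lemma support_drop (g : Vec) (x : Var) : (g.drop x).support = g.support \ {x} := by
  ext y
  by_cases hy : y = x <;> simp [support, drop, hy]

@[simp]
lemma support_unused : Vec.unused.support = ∅ := by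
  simp [support, unused]

lemma support_subset_of_le {g g' : Vec} (h : g.le g') : g'.support ⊆ g.support := by
  intro x hx hgx
  rcases h x with h | h | ⟨h, _⟩ <;> rw [hgx] at h
  · exact hx h.symm
  all_goals cases h

lemma lazify_eq_lazify_add_iff (γ δ : Vec) :
    γ.lazify = (γ.add δ).lazify ↔ δ.support ⊆ γ.support := by
  have pointwise (a b : Attr) : a.lazify = (a.add b).lazify ↔ (b ≠ .U → a ≠ .U) := by
    cases a <;> cases b <;> decide
  simp only [funext_iff, lazify, add, pointwise]
  rfl

lemma drop_comm (g : Vec) (x y : Var) : (g.drop x).drop y = (g.drop y).drop x := by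
  funext z
  by_cases hx : z = x <;> by_cases hy : z = y <;> simp [drop, hx, hy]

end Vec

namespace NTy

lemma drop_comm (τ : NTy) (x y : Var) : (τ.drop x).drop y = (τ.drop y).drop x := by
  induction τ <;> simp [drop, Vec.drop_comm, *]

lemma eff_drop (τ : NTy) (x : Var) : (τ.drop x).eff = τ.eff.drop x := by
  induction τ with
  | unit => funext y; simp [drop, eff, Vec.drop, Vec.unused]
  | prod _ _ _ _ ih1 ih2 | sum _ _ _ _ ih1 ih2 =>
    funext y
    by_cases hy : y = x <;> simp [drop, eff, ih1, ih2, Vec.add, Vec.drop, hy, Attr.add]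
  | arr z _ _ _ _ _ ih1 ih2 =>
    rw [drop, eff, eff, ih1, ih2, Vec.drop_comm]
    funext y
    by_cases hy : y = x <;> simp [Vec.add, Vec.drop, hy, Attr.add]

end NTy

lemma WFv_iff {γ : Vec} {τ : NTy} : WFv γ τ ↔ WFt τ ∧ τ.eff.support ⊆ γ.support := by
  rw [← Vec.lazify_eq_lazify_add_iff]
  exact ⟨fun ⟨ht, he⟩ => ⟨ht, he⟩, fun ⟨ht, he⟩ => ⟨ht, he⟩⟩

namespace WFv

variable {γ γ' : Vec} {τ : NTy}

lemma of_support_subset (ht : WFt τ) (h : τ.eff.support ⊆ γ.support) : WFv γ τ :=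
  WFv_iff.mpr ⟨ht, h⟩

lemma wft (h : WFv γ τ) : WFt τ := (WFv_iff.mp h).1

lemma support_subset (h : WFv γ τ) : τ.eff.support ⊆ γ.support := (WFv_iff.mp h).2

lemma mono (h : WFv γ' τ) (hs : γ'.support ⊆ γ.support) : WFv γ τ :=
  of_support_subset h.wft (h.support_subset.trans hs)

end WFv

mutual

theorem WFt.drop {τ : NTy} (x : Var) : WFt τ → WFt (τ.drop x)
  | .unit => .unit
  | .prod h1 h2 => .prod (h1.drop x) (h2.drop x)
  | .sum h1 h2 => .sum (h1.drop x) (h2.drop x)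
  | .arr (x := y) (τ2 := τ2) h1 h2 => .arr (h1.drop x) (NTy.drop_comm τ2 y x ▸ h2.drop x)

theorem WFv.drop {γ : Vec} {τ : NTy} (x : Var) : WFv γ τ → WFv (γ.drop x) (τ.drop x)
  | .mk ht he => .of_support_subset (ht.drop x) <| by
      rw [NTy.eff_drop, Vec.support_drop, Vec.support_drop]
      exact Set.sdiff_subset_sdiff_left ((Vec.lazify_eq_lazify_add_iff _ _).mp he)

end

lemma WFCtx.ext {Γ : NCtx} (hΓ : WFCtx Γ) {x : Var} {τ : NTy} {γ : Vec} (h : WFv γ τ) :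
    WFCtx (Γ.ext x τ γ) := by
  intro y τ' γ' hy
  by_cases hyx : y = x
  · simp only [NCtx.ext, if_pos hyx, Option.some.injEq, Prod.mk.injEq] at hy
    exact hy.1 ▸ hy.2 ▸ h
  · simp only [NCtx.ext, if_neg hyx] at hy
    exact hΓ y τ' γ' hy

namespace WFv

variable {γ γ1 γ2 : Vec} {τ1 τ2 : NTy}

lemma pair (h1 : WFv γ1 τ1) (h2 : WFv γ2 τ2) :
    WFv (γ1.add γ2).lazify (.prod τ1 γ1 τ2 γ2) :=
  of_support_subset (.prod h1 h2) <| by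
    simp only [NTy.eff, Vec.support_add, Vec.support_lazify]
    exact Set.union_subset (Set.union_subset subset_rfl
      (h1.support_subset.trans Set.subset_union_left))
      (h2.support_subset.trans Set.subset_union_right)

lemma inl (h1 : WFv γ1 τ1) (h2 : WFv γ2 τ2) :
    WFv ((γ1.add γ2).add τ2.eff).lazify (.sum τ1 γ1 τ2 γ2) :=
  of_support_subset (.sum h1 h2) <| by
    simp only [NTy.eff, Vec.support_add, Vec.support_lazify]
    exact Set.union_subset_union_left _ (Set.union_subset subset_rfl
      (h1.support_subset.trans Set.subset_union_left))

lemma inr (h1 : WFv γ1 τ1) (h2 : WFv γ2 τ2) :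
    WFv ((γ1.add γ2).add τ1.eff).lazify (.sum τ1 γ1 τ2 γ2) :=
  of_support_subset (.sum h1 h2) <| by
    simp only [NTy.eff, Vec.support_add, Vec.support_lazify]
    exact Set.union_subset subset_rfl
      (h2.support_subset.trans (Set.subset_union_right.trans Set.subset_union_left))

lemma lam {x : Var} (α : Attr) (h1 : WFv γ1 τ1) (h : WFv γ τ2) :
    WFv (γ1.add (γ.drop x)).lazify (.arr x α τ1 γ1 (γ.drop x) τ2) :=
  of_support_subset (.arr h1 (h.drop x)) <| by
    have h2 := (h.drop x).support_subset
    rw [NTy.eff_drop] at h2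
    simp only [NTy.eff, Vec.support_add, Vec.support_lazify]
    exact Set.union_subset (Set.union_subset Set.subset_union_right
      (h1.support_subset.trans Set.subset_union_left)) (h2.trans Set.subset_union_right)

lemma arr_result {x : Var} {α : Attr} {γ3 : Vec} (h : WFv γ1 (.arr x α τ1 γ2 γ3 τ2)) :
    WFv γ3 (τ2.drop x) := by
  rcases h.wft with _ | _ | _ | ⟨-, h3⟩
  exact h3

end WFv

/-- Well-formed derivations are valid: the vector of a typing derivation in
a well-formed context validates its type, i.e. `γ ⊢_WF τ`
(`𝕃(γ) = 𝕃(γ + 𝔼(τ))`). -/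
theorem wf_derivations_valid {Γ : NCtx} {e : Tm} {γ : Vec} {τ : NTy}
    (hΓ : WFCtx Γ) (h : NHasTy Γ e γ τ) : WFv γ τ := by
  induction h with
  | var hx => exact (hΓ _ _ _ hx).mono (by simp)
  | unit => exact .of_support_subset .unit (by simp [NTy.eff])
  | pair _ _ ih1 ih2 => exact (ih1 hΓ).pair (ih2 hΓ)
  | inl _ _ _ _ hv ih => exact (ih hΓ).inl hv
  | inr _ _ _ _ hv ih => exact hv.inr (ih hΓ)
  | sub _ hle ih => exact (ih hΓ).mono (Vec.support_subset_of_le hle)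
  | letin _ _ ih1 ih2 => exact ((ih2 (hΓ.ext (ih1 hΓ))).drop _).mono (by simp)
  | lam _ hv _ ih => exact .lam _ hv (ih (hΓ.ext hv))
  | app _ _ ih _ =>
    refine (ih hΓ).arr_result.mono ?_
    simpa using Set.subset_union_right.trans Set.subset_union_left
  | seq _ _ _ ih => exact (ih hΓ).mono (by simp)
  | split _ _ ih1 ih2 =>
    rcases (ih1 hΓ).wft with _ | ⟨h1, h2⟩
    exact (((ih2 ((hΓ.ext h1).ext h2)).drop _).drop _).mono (by simp)
  | case _ _ _ _ _ ih1 ih2 =>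
    rcases (ih1 hΓ).wft with _ | _ | ⟨h1, -⟩
    exact ((ih2 (hΓ.ext h1)).drop _).mono (by simp)
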